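/- arXiv:1211.3803 — 4 statements merged into one kernel-verified Lean document; each statement's English description precedes it below -/
import Mathlib

section
/- Let J = diag(λ₁,…,λₙ) be a traceless diagonal complex n×n matrix, and for k = 1,…,n−1 define J_k = J^k − (tr(J^k)/n)·I. With the bilinear form ⟨X,Y⟩ = 2n·tr(XY), the determinant of the (n−1)×(n−1) Gram matrix G with entries G_{ij} = ⟨J_i, J_j⟩ equals 2^{n−1} · n^{n−2} · D², where D = ∏_{i<j}(λ_i − λ_j) is the Vandermonde determinant of λ₁,…,λₙ. -/
/-!
Since `J` is diagonal, `⟨J_i, J_j⟩ = 2n ∑_a c_i(a) c_j(a)`, where `c_k(a) = λ_a^k - p_k/n` is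
the diagonal of `J_k`; so the Gram matrix is `2n · M Mᵀ` for the `(n-1) × n` matrix `M` of rows
`c_1, …, c_{n-1}`. Putting a row of ones on top of `M` gives a square matrix `N` that arises from
the transposed Vandermonde matrix by subtracting multiples of its first row, so `det N = ±D`.
Each row of `M` sums to zero, hence `N Nᵀ` is block diagonal with corner `n` and block `M Mᵀ`,
and `n · det (M Mᵀ) = det (N Nᵀ) = D²`.
-/

open Matrix Finset

variable {K : Type*} [Field K]

/-- Row `i` is the diagonal of `J_{i+1}`. -/
def centeredPowers {n : ℕ} (m : ℕ) (lam : Fin n → K) : Matrix (Fin m) (Fin n) K :=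
  of fun i a => lam a ^ ((i : ℕ) + 1) - (∑ b, lam b ^ ((i : ℕ) + 1)) / n

theorem diagonal_pow_sub_trace_smul_one {n : ℕ} (lam : Fin n → K) (k : ℕ) :
    diagonal lam ^ k - (trace (diagonal lam ^ k) / n) • (1 : Matrix (Fin n) (Fin n) K) =
      diagonal fun a => lam a ^ k - (∑ b, lam b ^ k) / n := by
  rw [diagonal_pow, trace_diagonal, smul_one_eq_diagonal, ← diagonal_sub]
  rfl

theorem traceForm_gram_eq_smul_centeredPowers {n : ℕ} (m : ℕ) (lam : Fin n → K) (c : K) :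
    of (fun i j : Fin m => c * trace
        ((diagonal lam ^ ((i : ℕ) + 1) -
            (trace (diagonal lam ^ ((i : ℕ) + 1)) / n) • (1 : Matrix (Fin n) (Fin n) K)) *
         (diagonal lam ^ ((j : ℕ) + 1) -
            (trace (diagonal lam ^ ((j : ℕ) + 1)) / n) • (1 : Matrix (Fin n) (Fin n) K)))) =
      c • (centeredPowers m lam * (centeredPowers m lam)ᵀ) := by
  ext i j
  simp only [diagonal_pow_sub_trace_smul_one, diagonal_mul_diagonal, trace_diagonal, of_apply,
    Matrix.smul_apply, mul_apply, transpose_apply, centeredPowers, smul_eq_mul]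

theorem sum_centeredPowers_apply {n : ℕ} (m : ℕ) (lam : Fin n → K) (hn : (n : K) ≠ 0)
    (i : Fin m) : ∑ a, centeredPowers m lam i a = 0 := by
  simp only [centeredPowers, of_apply, sum_sub_distrib, sum_const, card_univ, Fintype.card_fin,
    nsmul_eq_mul, mul_div_cancel₀ _ hn, sub_self]

def consOnes {R ι : Type*} [One R] {m : ℕ} (M : Matrix (Fin m) ι R) :
    Matrix (Fin (m + 1)) ι R :=
  of fun k a => Fin.cases 1 (fun i => M i a) k

@[simp]
theorem consOnes_zero {R ι : Type*} [One R] {m : ℕ} (M : Matrix (Fin m) ι R) (a : ι) :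
    consOnes M 0 a = 1 :=
  rfl

@[simp]
theorem consOnes_succ {R ι : Type*} [One R] {m : ℕ} (M : Matrix (Fin m) ι R) (i : Fin m)
    (a : ι) : consOnes M i.succ a = M i a :=
  rfl

theorem det_consOnes_centeredPowers {m : ℕ} (lam : Fin (m + 1) → K) :
    det (consOnes (centeredPowers m lam)) = det (vandermonde lam) := by
  rw [← det_transpose (vandermonde lam)]
  refine det_eq_of_forall_row_eq_smul_add_const
    (Fin.cases 0 fun i : Fin m => -(∑ b, lam b ^ ((i : ℕ) + 1)) / (m + 1 : ℕ)) 0 rfl ?_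
  intro k a
  cases k using Fin.cases with
  | zero => simp
  | succ i =>
    simp only [consOnes_succ, centeredPowers, of_apply, transpose_apply, vandermonde_apply,
      Fin.cases_succ, Fin.val_zero, Fin.val_succ, pow_zero]
    ring

theorem det_consOnes_mul_transpose {R ι : Type*} [CommRing R] [Fintype ι] {m : ℕ}
    (M : Matrix (Fin m) ι R) (hM : ∀ i, ∑ a, M i a = 0) :
    det (consOnes M * (consOnes M)ᵀ) = Fintype.card ι * det (M * Mᵀ) := by
  rw [det_succ_row_zero, Fin.sum_univ_succ]
  have hzero : ∀ j : Fin m, (consOnes M * (consOnes M)ᵀ) 0 j.succ = 0 := by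
    intro j
    simpa [mul_apply] using hM j
  have hcorner : (consOnes M * (consOnes M)ᵀ) 0 0 = Fintype.card ι := by
    simp [mul_apply]
  have hminor : (consOnes M * (consOnes M)ᵀ).submatrix Fin.succ Fin.succ = M * Mᵀ := by
    ext i j
    simp [mul_apply]
  simp [hzero, hcorner, hminor]

theorem det_vandermonde_sq {R : Type*} [CommRing R] {n : ℕ} (v : Fin n → R) :
    det (vandermonde v) ^ 2 = (∏ i : Fin n, ∏ j ∈ Ioi i, (v i - v j)) ^ 2 := by
  simp only [det_vandermonde, ← prod_pow]
  exact prod_congr rfl fun i _ => prod_congr rfl fun j _ => by ring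

theorem det_traceForm_gram_centeredPowers {m : ℕ} (lam : Fin (m + 1) → K)
    (hn : ((m + 1 : ℕ) : K) ≠ 0) :
    det (of fun i j : Fin m => 2 * ((m + 1 : ℕ) : K) * trace
        ((diagonal lam ^ ((i : ℕ) + 1) -
            (trace (diagonal lam ^ ((i : ℕ) + 1)) / (m + 1 : ℕ)) •
              (1 : Matrix (Fin (m + 1)) (Fin (m + 1)) K)) *
         (diagonal lam ^ ((j : ℕ) + 1) -
            (trace (diagonal lam ^ ((j : ℕ) + 1)) / (m + 1 : ℕ)) •
              (1 : Matrix (Fin (m + 1)) (Fin (m + 1)) K)))) =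
      2 ^ m * ((m + 1 : ℕ) : K) ^ (m - 1) *
        (∏ i : Fin (m + 1), ∏ j ∈ Ioi i, (lam i - lam j)) ^ 2 := by
  set M := centeredPowers m lam
  have hgram : ((m + 1 : ℕ) : K) * det (M * Mᵀ) =
      (∏ i : Fin (m + 1), ∏ j ∈ Ioi i, (lam i - lam j)) ^ 2 := by
    calc ((m + 1 : ℕ) : K) * det (M * Mᵀ) = det (consOnes M * (consOnes M)ᵀ) := by
          rw [det_consOnes_mul_transpose M (sum_centeredPowers_apply m lam hn), Fintype.card_fin]
      _ = det (vandermonde lam) ^ 2 := by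
          rw [det_mul, det_transpose, det_consOnes_centeredPowers, sq]
      _ = _ := det_vandermonde_sq lam
  rw [traceForm_gram_eq_smul_centeredPowers, det_smul, Fintype.card_fin]
  cases m with
  | zero => simp
  | succ k =>
    rw [← hgram, Nat.add_sub_cancel]
    ring

theorem stmt_0_general (n : ℕ) (lam : Fin n → ℂ) :
    Matrix.det (Matrix.of (fun i j : Fin (n - 1) =>
      (2 * (n : ℂ)) * Matrix.trace
        (((Matrix.diagonal lam) ^ ((i : ℕ) + 1) -
            (Matrix.trace ((Matrix.diagonal lam) ^ ((i : ℕ) + 1)) / (n : ℂ)) •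
              (1 : Matrix (Fin n) (Fin n) ℂ)) *
         ((Matrix.diagonal lam) ^ ((j : ℕ) + 1) -
            (Matrix.trace ((Matrix.diagonal lam) ^ ((j : ℕ) + 1)) / (n : ℂ)) •
              (1 : Matrix (Fin n) (Fin n) ℂ)))))
    = 2 ^ (n - 1) * (n : ℂ) ^ (n - 2) *
        (∏ i : Fin n, ∏ j ∈ Finset.Ioi i, (lam i - lam j)) ^ 2 := by
  cases n with
  | zero => simp
  | succ m => exact det_traceForm_gram_centeredPowers lam (Nat.cast_ne_zero.2 m.succ_ne_zero)

/-- Gram determinant of the powers J_k = J^k - (tr J^k / n) I with respect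
to ⟨X,Y⟩ = 2n tr(XY) equals 2^(n-1) n^(n-2) D², D the Vandermonde determinant. -/
theorem stmt_0 (n : ℕ) (hn : 0 < n) (lam : Fin n → ℂ) (hsum : ∑ i, lam i = 0) :
    Matrix.det (Matrix.of (fun i j : Fin (n - 1) =>
      (2 * (n : ℂ)) * Matrix.trace
        (((Matrix.diagonal lam) ^ ((i : ℕ) + 1) -
            (Matrix.trace ((Matrix.diagonal lam) ^ ((i : ℕ) + 1)) / (n : ℂ)) •
              (1 : Matrix (Fin n) (Fin n) ℂ)) *
         ((Matrix.diagonal lam) ^ ((j : ℕ) + 1) -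
            (Matrix.trace ((Matrix.diagonal lam) ^ ((j : ℕ) + 1)) / (n : ℂ)) •
              (1 : Matrix (Fin n) (Fin n) ℂ)))))
    = 2 ^ (n - 1) * (n : ℂ) ^ (n - 2) *
        (∏ i : Fin n, ∏ j ∈ Finset.Ioi i, (lam i - lam j)) ^ 2 :=
  stmt_0_general n lam
end

section
/- Let S : ℝ → sl(n,ℂ) be smooth with S(x) = ψ(x)^{-1} J ψ(x) for smooth invertible ψ and fixed traceless diagonal J, and set S_k = S^k − (tr(J^k)/n)·I for k = 1,…,n−1. Then for all 1 ≤ k, l ≤ n−1, ⟨S_k(x), ∂_x S_l(x)⟩ = 0, i.e. the derivatives S_{l;x} are orthogonal (with respect to the Killing form) to the Cartan subalgebra ker(ad_{S(x)}). -/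
/-!
Conjugation by `ψ(x)` does not change the trace of any power, so `x ↦ tr (S(x)^m)` is constant.
Differentiating, `0 = tr ((S^(m+1))') = (m+1) tr (S^m S')`, and by cyclicity of the trace
`tr (S^k (S^l)') = l tr (S^(k+l-1) S') = 0`; the scalar shifts in `S_k` and `S_l` only contribute
multiples of `tr ((S^l)') = 0`.
-/

open Matrix Finset

namespace Matrix

variable {𝕜 𝔸 m : Type*} [NontriviallyNormedField 𝕜] [NormedCommRing 𝔸]
  [NormedAlgebra 𝕜 𝔸]

def EntrywiseDifferentiable (A : 𝕜 → Matrix m m 𝔸) : Prop :=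
  ∀ i j, Differentiable 𝕜 fun x => A x i j

noncomputable def entrywiseDeriv (A : 𝕜 → Matrix m m 𝔸) (x : 𝕜) : Matrix m m 𝔸 :=
  of fun i j => deriv (fun y => A y i j) x

theorem entrywiseDeriv_const (C : Matrix m m 𝔸) (x : 𝕜) :
    entrywiseDeriv (fun _ => C) x = 0 := by
  ext i j
  simp [entrywiseDeriv]

theorem entrywiseDeriv_sub_const (A : 𝕜 → Matrix m m 𝔸) (C : Matrix m m 𝔸) (x : 𝕜) :
    entrywiseDeriv (fun y => A y - C) x = entrywiseDeriv A x := by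
  ext i j
  exact deriv_sub_const _

variable [Fintype m] {A B : 𝕜 → Matrix m m 𝔸}

theorem EntrywiseDifferentiable.mul (hA : EntrywiseDifferentiable A)
    (hB : EntrywiseDifferentiable B) : EntrywiseDifferentiable fun x => A x * B x := by
  intro i j
  simp only [mul_apply]
  exact Differentiable.fun_sum fun t _ => (hA i t).mul (hB t j)

theorem entrywiseDeriv_mul (hA : EntrywiseDifferentiable A) (hB : EntrywiseDifferentiable B)
    (x : 𝕜) :
    entrywiseDeriv (fun y => A y * B y) x =
      entrywiseDeriv A x * B x + A x * entrywiseDeriv B x := by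
  ext i j
  simp only [entrywiseDeriv, mul_apply, add_apply, of_apply]
  rw [deriv_fun_sum fun t _ => ((hA i t).fun_mul (hB t j)).differentiableAt,
    ← sum_add_distrib]
  exact sum_congr rfl fun t _ =>
    deriv_fun_mul (hA i t).differentiableAt (hB t j).differentiableAt

theorem deriv_trace (hA : EntrywiseDifferentiable A) (x : 𝕜) :
    deriv (fun y => trace (A y)) x = trace (entrywiseDeriv A x) := by
  simp only [trace, diag, entrywiseDeriv, of_apply]
  exact deriv_fun_sum fun i _ => (hA i i).differentiableAt

variable [DecidableEq m]

theorem EntrywiseDifferentiable.pow (hA : EntrywiseDifferentiable A) (k : ℕ) :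
    EntrywiseDifferentiable fun x => A x ^ k := by
  induction k with
  | zero => exact fun i j => by simpa only [pow_zero] using differentiable_const _
  | succ k ih => simpa only [pow_succ] using ih.mul hA

theorem entrywiseDeriv_pow_succ (hA : EntrywiseDifferentiable A) (k : ℕ) (x : 𝕜) :
    entrywiseDeriv (fun y => A y ^ (k + 1)) x =
      entrywiseDeriv (fun y => A y ^ k) x * A x + A x ^ k * entrywiseDeriv A x := by
  simpa only [pow_succ] using entrywiseDeriv_mul (hA.pow k) hA x

theorem trace_pow_mul_entrywiseDeriv_pow_succ (hA : EntrywiseDifferentiable A) (k l : ℕ)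
    (x : 𝕜) :
    trace (A x ^ k * entrywiseDeriv (fun y => A y ^ (l + 1)) x) =
      (l + 1 : 𝔸) * trace (A x ^ (k + l) * entrywiseDeriv A x) := by
  induction l generalizing k with
  | zero => simp
  | succ l ih =>
    rw [entrywiseDeriv_pow_succ hA, mul_add, trace_add, ← mul_assoc, trace_mul_comm _ (A x),
      ← mul_assoc, ← pow_succ', ih, ← mul_assoc, ← pow_add, Nat.add_right_comm k 1 l,
      ← add_assoc]
    push_cast
    ring

theorem trace_pow_mul_entrywiseDeriv_eq_zero [NoZeroDivisors 𝔸] [CharZero 𝔸]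
    (hA : EntrywiseDifferentiable A) {k : ℕ} {c : 𝔸} (hc : ∀ y, trace (A y ^ (k + 1)) = c)
    (x : 𝕜) : trace (A x ^ k * entrywiseDeriv A x) = 0 := by
  have h := trace_pow_mul_entrywiseDeriv_pow_succ hA 0 k x
  rw [pow_zero, one_mul, ← deriv_trace (hA.pow _), funext hc, deriv_const, zero_add] at h
  exact (mul_eq_zero.mp h.symm).resolve_left (Nat.cast_add_one_ne_zero k)

theorem trace_pow_mul_entrywiseDeriv_pow_eq_zero [NoZeroDivisors 𝔸] [CharZero 𝔸]
    (hA : EntrywiseDifferentiable A) {c : ℕ → 𝔸} (hc : ∀ k y, trace (A y ^ k) = c k)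
    (k l : ℕ) (x : 𝕜) : trace (A x ^ k * entrywiseDeriv (fun y => A y ^ l) x) = 0 := by
  cases l with
  | zero => simp only [pow_zero, entrywiseDeriv_const, mul_zero, trace_zero]
  | succ l =>
    rw [trace_pow_mul_entrywiseDeriv_pow_succ hA,
      trace_pow_mul_entrywiseDeriv_eq_zero hA (hc _) x, mul_zero]

theorem trace_pow_sub_smul_one_mul_entrywiseDeriv_pow_sub_smul_one_eq_zero [NoZeroDivisors 𝔸]
    [CharZero 𝔸] (hA : EntrywiseDifferentiable A) {c : ℕ → 𝔸}
    (hc : ∀ k y, trace (A y ^ k) = c k) (k l : ℕ) (a b : 𝔸) (x : 𝕜) :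
    trace ((A x ^ k - a • 1) * entrywiseDeriv (fun y => A y ^ l - b • 1) x) = 0 := by
  have hk := trace_pow_mul_entrywiseDeriv_pow_eq_zero hA hc k l x
  have h0 := trace_pow_mul_entrywiseDeriv_pow_eq_zero hA hc 0 l x
  rw [pow_zero, one_mul] at h0
  rw [entrywiseDeriv_sub_const, sub_mul, smul_mul, one_mul, trace_sub, trace_smul, hk, h0,
    smul_zero, sub_zero]

theorem trace_pow_conj' {M : Matrix m m 𝔸} (hM : IsUnit M) (N : Matrix m m 𝔸) (k : ℕ) :
    trace ((M⁻¹ * N * M) ^ k) = trace (N ^ k) := by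
  rw [← hM.unit_spec, ← coe_units_inv, Units.conj_pow', trace_units_conj']

end Matrix

theorem stmt_3_general (n : ℕ) (lam : Fin n → ℂ)
    (ψ : ℝ → Matrix (Fin n) (Fin n) ℂ) (hψ : ∀ x, IsUnit (ψ x))
    (S : ℝ → Matrix (Fin n) (Fin n) ℂ)
    (hS : ∀ x, S x = (ψ x)⁻¹ * Matrix.diagonal lam * ψ x)
    (hdiff : ∀ i j : Fin n, Differentiable ℝ (fun x => S x i j)) :
    ∀ k l : ℕ, 1 ≤ k → k ≤ n - 1 → 1 ≤ l → l ≤ n - 1 → ∀ x : ℝ,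
      (2 * (n : ℂ)) * Matrix.trace
        ((S x ^ k - (Matrix.trace ((Matrix.diagonal lam) ^ k) / (n : ℂ)) •
            (1 : Matrix (Fin n) (Fin n) ℂ)) *
         Matrix.of (fun i j : Fin n => deriv (fun y =>
            (S y ^ l - (Matrix.trace ((Matrix.diagonal lam) ^ l) / (n : ℂ)) •
              (1 : Matrix (Fin n) (Fin n) ℂ)) i j) x)) = 0 := by
  intro k l _ _ _ _ x
  have hconst : ∀ m y, trace (S y ^ m) = trace (diagonal lam ^ m) := fun m y => by
    rw [hS y, trace_pow_conj' (hψ y)]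
  exact mul_eq_zero_of_right _
    (trace_pow_sub_smul_one_mul_entrywiseDeriv_pow_sub_smul_one_eq_zero hdiff hconst k l _ _ x)

/-- For S(x) = ψ(x)⁻¹ J ψ(x) with J traceless diagonal and
S_k = S^k - (tr J^k / n) I, one has ⟨S_k(x), ∂ₓ S_l(x)⟩ = 0 for 1 ≤ k, l ≤ n-1,
where ⟨X,Y⟩ = 2n tr(XY) is the Killing form. -/
theorem stmt_3 (n : ℕ) (hn : 0 < n) (lam : Fin n → ℂ) (hsum : ∑ i, lam i = 0)
    (ψ : ℝ → Matrix (Fin n) (Fin n) ℂ) (hψ : ∀ x, IsUnit (ψ x))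
    (S : ℝ → Matrix (Fin n) (Fin n) ℂ)
    (hS : ∀ x, S x = (ψ x)⁻¹ * Matrix.diagonal lam * ψ x)
    (hdiff : ∀ i j : Fin n, Differentiable ℝ (fun x => S x i j)) :
    ∀ k l : ℕ, 1 ≤ k → k ≤ n - 1 → 1 ≤ l → l ≤ n - 1 → ∀ x : ℝ,
      (2 * (n : ℂ)) * Matrix.trace
        ((S x ^ k - (Matrix.trace ((Matrix.diagonal lam) ^ k) / (n : ℂ)) •
            (1 : Matrix (Fin n) (Fin n) ℂ)) *
         Matrix.of (fun i j : Fin n => deriv (fun y =>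
            (S y ^ l - (Matrix.trace ((Matrix.diagonal lam) ^ l) / (n : ℂ)) •
              (1 : Matrix (Fin n) (Fin n) ℂ)) i j) x)) = 0 :=
  stmt_3_general n lam ψ hψ S hS hdiff
end

section
/- Let S ∈ sl(3,ℂ) be conjugate to J = diag(λ₁,λ₂,λ₃) with λ₁+λ₂+λ₃ = 0 and pairwise distinct differences λ_i − λ_j. Set C₂ = λ₁²+λ₂²+λ₃² and D = (λ₁−λ₂)(λ₂−λ₃)(λ₁−λ₃). Then on the image of ad_S one has ad_S^{−1} = l(ad_S) where l(λ) = (λ/D²)(λ² − (3/2)C₂)², and l(ad_S) vanishes on ker(ad_S). -/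
open Matrix Polynomial

/-!
Conjugating by `g` turns `ad_S` into `ad_J`, whose eigenvectors are the matrix units `E_ij`, with
eigenvalues `λ_i - λ_j`. Since `Σ λ_i = 0`, every `μ = λ_i - λ_j` satisfies
`μ (μ² (μ² - (3/2) C₂)² - D²) = 0`, so with `q(x) = (x² - (3/2) C₂)²` we get
`ad_S³ q(ad_S) = D² ad_S`. As `l(x) = x q(x) / D²`, this reads `ad_S l(ad_S) ad_S = ad_S`,
and `l(ad_S) = q(ad_S) ad_S / D²` kills `ker ad_S`.
-/

section
variable {K A V : Type*} [Field K] [Ring A] [Algebra K A] [AddCommGroup V] [Module K V]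

theorem mul_inv_smul_mul_aeval_mul_eq_self {T : A} {q : K[X]} {a : K} (ha : a ≠ 0)
    (h : aeval T (X ^ 3 * q - C a * X) = 0) :
    T * (a⁻¹ • (T * aeval T q)) * T = T := by
  have hcube : aeval T (X ^ 3 * q) = a • T := by
    simpa [sub_eq_zero, Algebra.smul_def] using h
  calc T * (a⁻¹ • (T * aeval T q)) * T = a⁻¹ • aeval T (X * (X * q) * X) := by
        simp only [map_mul, aeval_X, mul_smul_comm, smul_mul_assoc]
    _ = T := by rw [show X * (X * q) * X = X ^ 3 * q by ring, hcube, inv_smul_smul₀ ha]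

theorem Module.End.mul_aeval_apply_eq_zero {T : Module.End K V} (q : K[X]) {z : V}
    (hz : T z = 0) : (T * aeval T q) z = 0 := by
  have hcomm : T * aeval T q = aeval T q * T := by
    simpa only [aeval_X] using ((Commute.all X q).map (aeval T)).eq
  rw [hcomm, Module.End.mul_apply, hz, map_zero]
end

def ad (R : Type*) {A : Type*} [CommSemiring R] [Ring A] [Algebra R A] (x : A) :
    Module.End R A :=
  LinearMap.mulLeft R x - LinearMap.mulRight R x

section
variable {R A : Type*} [CommSemiring R] [Ring A] [Algebra R A]

@[simp]
theorem ad_apply (x y : A) : ad R x y = x * y - y * x := rfl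

theorem conjAlgEquiv_ad (σ : A ≃ₐ[R] A) (x : A) :
    σ.toLinearEquiv.conjAlgEquiv R (ad R x) = ad R (σ x) := by
  ext y
  simp [LinearEquiv.conjAlgEquiv_apply]

theorem aeval_ad_map_eq_zero (σ : A ≃ₐ[R] A) {x : A} {p : R[X]} (h : aeval (ad R x) p = 0) :
    aeval (ad R (σ x)) p = 0 := by
  rw [← conjAlgEquiv_ad, aeval_algEquiv, AlgHom.comp_apply, h, map_zero]

theorem aeval_ad_units_conj_eq_zero (u : Aˣ) {x : A} {p : R[X]} (h : aeval (ad R x) p = 0) :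
    aeval (ad R (u * x * u⁻¹ : A)) p = 0 :=
  aeval_ad_map_eq_zero (MulSemiringAction.toAlgEquiv R A (ConjAct.toConjAct u)) h
end

section
variable {n R : Type*} [Fintype n] [DecidableEq n] [CommRing R]

theorem Matrix.ad_diagonal_single (d : n → R) (i j : n) :
    ad R (diagonal d) (single i j 1) = (d i - d j) • single i j 1 := by
  ext k l
  simp only [ad_apply, Matrix.sub_apply, diagonal_mul, mul_diagonal, Matrix.smul_apply,
    single_apply, smul_eq_mul]
  split_ifs <;> simp_all

theorem Matrix.hasEigenvector_ad_diagonal_single [Nontrivial R] (d : n → R) (i j : n) :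
    Module.End.HasEigenvector (ad R (diagonal d)) (d i - d j) (single i j 1) :=
  ⟨Module.End.mem_eigenspace_iff.mpr (ad_diagonal_single d i j),
    fun h => one_ne_zero (by simpa using congrFun₂ h i j : (1 : R) = 0)⟩

theorem Matrix.aeval_ad_diagonal_eq_zero (d : n → R) {p : R[X]}
    (hp : ∀ i j, p.IsRoot (d i - d j)) :
    aeval (ad R (diagonal d)) p = 0 := by
  nontriviality R
  refine (Matrix.stdBasis R n n).ext fun ⟨i, j⟩ => ?_
  rw [stdBasis_eq_single, Module.End.aeval_apply_of_hasEigenvector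
    (hasEigenvector_ad_diagonal_single d i j), (hp i j).eq_zero, zero_smul, LinearMap.zero_apply]
end

theorem isRoot_sub_of_sum_fin_three_eq_zero {K : Type*} [Field K] [CharZero K] (lam : Fin 3 → K)
    (hsum : ∑ i, lam i = 0) (i j : Fin 3) :
    (X ^ 3 * (X ^ 2 - C (3 / 2 * (lam 0 ^ 2 + lam 1 ^ 2 + lam 2 ^ 2))) ^ 2 -
      C (((lam 0 - lam 1) * (lam 1 - lam 2) * (lam 0 - lam 2)) ^ 2) * X).IsRoot
      (lam i - lam j) := by
  have h2 : lam 2 = -lam 0 - lam 1 := by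
    rw [Fin.sum_univ_three] at hsum
    linear_combination hsum
  simp only [IsRoot, eval_sub, eval_mul, eval_pow, eval_X, eval_C]
  fin_cases i <;> fin_cases j <;> simp only [Fin.zero_eta, Fin.mk_one, Fin.reduceFinMk, h2] <;> ring

/-- For S ∈ sl(3,ℂ) conjugate to J = diag(λ₁,λ₂,λ₃), Σλᵢ = 0, with the
differences λᵢ - λⱼ pairwise distinct, and C₂ = Σλᵢ², D = (λ₁-λ₂)(λ₂-λ₃)(λ₁-λ₃):
on im(ad_S) the inverse of ad_S is l(ad_S) with l(λ) = (λ/D²)(λ² - (3/2)C₂)², and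
l(ad_S) vanishes on ker(ad_S). -/
theorem stmt_10 (lam : Fin 3 → ℂ) (hsum : ∑ i, lam i = 0)
    (hdist : ∀ i j k l : Fin 3, i ≠ j → k ≠ l → (i, j) ≠ (k, l) →
      lam i - lam j ≠ lam k - lam l)
    (S : Matrix (Fin 3) (Fin 3) ℂ)
    (g : Matrix (Fin 3) (Fin 3) ℂ) (hg : IsUnit g)
    (hS : S = g * Matrix.diagonal lam * g⁻¹)
    (adS : Matrix (Fin 3) (Fin 3) ℂ → Matrix (Fin 3) (Fin 3) ℂ)
    (hadS : ∀ X, adS X = S * X - X * S)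
    (C₂ D : ℂ)
    (hC₂ : C₂ = lam 0 ^ 2 + lam 1 ^ 2 + lam 2 ^ 2)
    (hD : D = (lam 0 - lam 1) * (lam 1 - lam 2) * (lam 0 - lam 2))
    (lad : Matrix (Fin 3) (Fin 3) ℂ → Matrix (Fin 3) (Fin 3) ℂ)
    (hlad : ∀ Z, lad Z = (D ^ 2)⁻¹ •
      adS ((adS (adS (adS (adS Z) - (3 / 2 : ℂ) • C₂ • Z))
            - (3 / 2 : ℂ) • C₂ • (adS (adS Z) - (3 / 2 : ℂ) • C₂ • Z)))) :
    (∀ X : Matrix (Fin 3) (Fin 3) ℂ, adS (lad (adS X)) = adS X) ∧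
    (∀ Z : Matrix (Fin 3) (Fin 3) ℂ, adS Z = 0 → lad Z = 0) := by
  obtain ⟨u, rfl⟩ := hg
  set q : ℂ[X] := (X ^ 2 - C (3 / 2 * C₂)) ^ 2
  have hadS_eq : adS = ad ℂ S := funext fun X => by rw [hadS, ad_apply]
  have hlad_eq : lad = ⇑((D ^ 2)⁻¹ • (ad ℂ S * aeval (ad ℂ S) q)) := by
    funext Z
    simp only [hlad, hadS_eq, q, smul_smul, sq, map_mul, map_sub, aeval_X, aeval_C,
      Module.End.mul_apply, LinearMap.smul_apply, LinearMap.sub_apply,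
      Module.algebraMap_end_apply, map_smul]
    congr 1
    module
  have hp : aeval (ad ℂ S) (X ^ 3 * q - C (D ^ 2) * X) = 0 := by
    rw [hS, ← Matrix.coe_units_inv]
    simp only [q, hC₂, hD]
    exact aeval_ad_units_conj_eq_zero u
      (aeval_ad_diagonal_eq_zero lam (isRoot_sub_of_sum_fin_three_eq_zero lam hsum))
  have hne : ∀ i j, i ≠ j → lam i - lam j ≠ 0 := fun i j hij h =>
    hdist i j j i hij hij.symm (by simp [hij]) (by linear_combination (2 : ℂ) * h)
  have hD0 : D ≠ 0 := by
    rw [hD]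
    exact mul_ne_zero (mul_ne_zero (hne 0 1 (by decide)) (hne 1 2 (by decide)))
      (hne 0 2 (by decide))
  subst hadS_eq hlad_eq
  exact ⟨fun X => congrArg (· X) (mul_inv_smul_mul_aeval_mul_eq_self (pow_ne_zero 2 hD0) hp),
    fun Z hZ => by rw [LinearMap.smul_apply, Module.End.mul_aeval_apply_eq_zero q hZ, smul_zero]⟩
end

section
/- Let S : ℝ → sl(n,ℂ)∩{Hermitian} be a smooth curve in the adjoint orbit of a real regular diagonal J, let S_k = S^k − (tr J^k/n)I, and let G be the constant Gram matrix G_{ij} = ⟨S_i,S_j⟩. Suppose a : ℝ → ℂ^{n−1} is smooth with A := Σ_k a_k S_k and i∂_x A ∈ h_S^⊥ pointwise (h_S^⊥ = Killing-orthogonal complement of ker ad_{S(x)}). Then a_x = 0, i.e. the coefficients a_k are constant. -/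
/-!
Since `S x` is conjugate to `J`, every `tr (S x ^ m)` is constant in `x`; differentiating gives
`tr (S' S^m) = 0`, and then by cyclicity the derivative of each power `S^k` is trace-orthogonal
to every power `S^m`. The powers `S^m` commute with `S`, so testing `i A'` against them kills the
terms `aₖ (S^(k+1))'` and leaves `∑ₖ a'ₖ tr (Sₖ S^m) = ∑ᵢ λᵢ^m p(λᵢ) = 0` for all `m`, where
`p(t) = ∑ₖ a'ₖ (t^(k+1) - cₖ)` with `cₖ = tr J^(k+1) / n`. As the `λᵢ` are distinct, the
Vandermonde matrix shows first that `p` vanishes at all `n` eigenvalues and then, since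
`deg p < n`, that every `a'ₖ` is zero.
-/

open Matrix Finset

section Trace

variable {ι R : Type*} [Fintype ι] [DecidableEq ι] [CommRing R]

theorem trace_conj_pow {g : Matrix ι ι R} (hg : IsUnit g) (d : Matrix ι ι R) (m : ℕ) :
    trace ((g * d * g⁻¹) ^ m) = trace (d ^ m) := by
  obtain ⟨u, rfl⟩ := hg
  rw [← coe_units_inv, Units.conj_pow, trace_units_conj]

theorem trace_sum_pow_mul_pow_mul_of_commute {s Y : Matrix ι ι R} (d : Matrix ι ι R)
    (h : Commute s Y) (m : ℕ) :
    trace ((∑ i ∈ range m, s ^ (m.pred - i) * d * s ^ i) * Y) =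
      m * trace (d * s ^ m.pred * Y) := by
  have hterm : ∀ i ∈ range m,
      trace (s ^ (m.pred - i) * d * s ^ i * Y) = trace (d * s ^ m.pred * Y) := by
    intro i hi
    have hi : i ≤ m.pred := Nat.le_pred_of_lt (mem_range.1 hi)
    calc trace (s ^ (m.pred - i) * d * s ^ i * Y)
        = trace (d * s ^ i * Y * s ^ (m.pred - i)) := by
          rw [mul_assoc, mul_assoc, trace_mul_comm]; simp only [mul_assoc]
      _ = trace (d * s ^ (i + (m.pred - i)) * Y) := by
          rw [mul_assoc, (h.pow_left _).symm.eq, pow_add]; simp only [mul_assoc]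
      _ = trace (d * s ^ m.pred * Y) := by rw [Nat.add_sub_cancel' hi]
  rw [sum_mul, trace_sum, sum_congr rfl hterm, sum_const, card_range, nsmul_eq_mul]

end Trace

section Vandermonde

variable {R : Type*} [CommRing R] [IsDomain R]

theorem eq_zero_of_forall_sum_pow_mul_eq_zero {n : ℕ} {f v : Fin n → R}
    (hf : Function.Injective f) (hfv : ∀ j : Fin n, ∑ i, f i ^ (j : ℕ) * v i = 0) : v = 0 := by
  refine eq_zero_of_mulVec_eq_zero (by rwa [det_transpose, det_vandermonde_ne_zero_iff]) ?_
  ext j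
  simpa [mulVec, dotProduct] using hfv j

theorem eq_zero_of_forall_sum_mul_pow_succ_sub_eq_zero {N : ℕ} {f : Fin (N + 1) → R}
    (hf : Function.Injective f) {d c : Fin N → R}
    (h : ∀ i, ∑ k, d k * (f i ^ ((k : ℕ) + 1) - c k) = 0) : d = 0 := by
  have hcoeff :=
    eq_zero_of_forall_index_sum_pow_mul_eq_zero (v := Fin.cons (-∑ k, d k * c k) d) hf fun i => by
      rw [Fin.sum_univ_succ, ← h i]
      simp only [Fin.cons_zero, Fin.cons_succ, Fin.val_zero, pow_zero, one_mul, Fin.val_succ,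
        mul_sub, sum_sub_distrib, mul_comm (f i ^ _)]
      ring
  funext k
  simpa using congrFun hcoeff k.succ

theorem eq_zero_of_forall_sum_mul_sum_pow_sub_eq_zero {N : ℕ} {f : Fin (N + 1) → R}
    (hf : Function.Injective f) {d c : Fin N → R}
    (h : ∀ m : ℕ, ∑ k, d k * (∑ i, f i ^ ((k : ℕ) + 1 + m) - c k * ∑ i, f i ^ m) = 0) : d = 0 := by
  have hvalues : (fun i => ∑ k, d k * (f i ^ ((k : ℕ) + 1) - c k)) = 0 :=
    eq_zero_of_forall_sum_pow_mul_eq_zero hf fun m => by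
      rw [← h m]
      simp only [mul_sum, mul_sub, sum_sub_distrib]
      congr 1 <;> rw [sum_comm] <;>
        exact sum_congr rfl fun _ _ => sum_congr rfl fun _ _ => by ring
  exact eq_zero_of_forall_sum_mul_pow_succ_sub_eq_zero hf (congrFun hvalues)

end Vandermonde

section Calculus

-- Any submultiplicative norm would do: it only makes matrices a normed algebra, and every
-- statement that leaves this section is entrywise.
attribute [local instance] Matrix.linftyOpNormedRing Matrix.linftyOpNormedAlgebra

variable {𝕜 K ι : Type*} [NontriviallyNormedField 𝕜] [NormedField K] [NormedAlgebra 𝕜 K]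
  [Fintype ι] [DecidableEq ι] {F : 𝕜 → Matrix ι ι K} {F' : Matrix ι ι K} {x : 𝕜}

theorem hasDerivAt_matrix_iff :
    HasDerivAt F F' x ↔ ∀ i j, HasDerivAt (fun y => F y i j) (F' i j) x :=
  hasDerivAt_iff_tendsto_slope.trans <| tendsto_pi_nhds.trans <| forall_congr' fun _ =>
    tendsto_pi_nhds.trans <| forall_congr' fun _ => hasDerivAt_iff_tendsto_slope.symm

theorem HasDerivAt.matrix_trace (hF : HasDerivAt F F' x) :
    HasDerivAt (fun y => trace (F y)) (trace F') x := by
  simp only [trace, Matrix.diag]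
  exact HasDerivAt.fun_sum fun i _ => hasDerivAt_matrix_iff.1 hF i i

variable [CharZero K] {c : ℕ → K}

theorem trace_mul_pow_eq_zero_of_trace_pow_eq (hF : HasDerivAt F F' x)
    (htr : ∀ m y, trace (F y ^ m) = c m) (m : ℕ) : trace (F' * F x ^ m) = 0 := by
  have hderiv := (hF.fun_pow' (m + 1)).matrix_trace
  simp only [htr] at hderiv
  have h := hderiv.unique (hasDerivAt_const x (c (m + 1)))
  rw [← mul_one (∑ i ∈ _, _), trace_sum_pow_mul_pow_mul_of_commute _ (Commute.one_right _),
    mul_one, Nat.pred_succ] at h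
  exact (mul_eq_zero.1 h).resolve_left (Nat.cast_ne_zero.2 m.succ_ne_zero)

theorem trace_sum_pow_mul_pow_mul_pow_eq_zero (hF : HasDerivAt F F' x)
    (htr : ∀ m y, trace (F y ^ m) = c m) (k m : ℕ) :
    trace ((∑ i ∈ range k, F x ^ (k.pred - i) * F' * F x ^ i) * F x ^ m) = 0 := by
  rw [trace_sum_pow_mul_pow_mul_of_commute _ ((Commute.refl _).pow_right m), mul_assoc,
    ← pow_add, trace_mul_pow_eq_zero_of_trace_pow_eq hF htr, mul_zero]

theorem trace_deriv_sum_smul_mul_pow {κ : Type*} [Fintype κ]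
    (hF : ∀ i j, HasDerivAt (fun y => F y i j) (F' i j) x) (htr : ∀ m y, trace (F y ^ m) = c m)
    {a : 𝕜 → κ → K} (ha : ∀ k, DifferentiableAt 𝕜 (fun y => a y k) x) (e : κ → ℕ) (b : κ → K)
    (m : ℕ) :
    trace ((of fun i j => deriv (fun y => (∑ k, a y k • (F y ^ e k - b k • 1)) i j) x) *
        F x ^ m) =
      ∑ k, deriv (fun y => a y k) x * trace ((F x ^ e k - b k • 1) * F x ^ m) := by
  have hF := hasDerivAt_matrix_iff.2 hF
  have hA := HasDerivAt.fun_sum (u := univ) fun k _ =>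
    (ha k).hasDerivAt.smul ((hF.fun_pow' (e k)).sub_const (b k • 1))
  have hA' : (of fun i j => deriv (fun y => (∑ k, a y k • (F y ^ e k - b k • 1)) i j) x) =
      ∑ k, (a x k • ∑ i ∈ range (e k), F x ^ ((e k).pred - i) * F' * F x ^ i +
        deriv (fun y => a y k) x • (F x ^ e k - b k • 1)) :=
    ext fun i j => (hasDerivAt_matrix_iff.1 hA i j).deriv
  rw [hA', sum_mul, trace_sum]
  refine sum_congr rfl fun k _ => ?_
  rw [add_mul, trace_add, smul_mul, smul_mul, trace_smul, trace_smul,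
    trace_sum_pow_mul_pow_mul_pow_eq_zero hF htr, smul_zero, zero_add, smul_eq_mul]

end Calculus

theorem stmt_18_general (n : ℕ)
    (lam : Fin n → ℝ) (hinj : Function.Injective lam)
    (S : ℝ → Matrix (Fin n) (Fin n) ℂ)
    (g : ℝ → Matrix (Fin n) (Fin n) ℂ) (hg : ∀ x, IsUnit (g x))
    (hS : ∀ x, S x = g x * Matrix.diagonal (fun i => (lam i : ℂ)) * (g x)⁻¹)
    (hSdiff : ∀ i j : Fin n, Differentiable ℝ (fun x => S x i j))
    (a : ℝ → Fin (n - 1) → ℂ)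
    (hadiff : ∀ k : Fin (n - 1), Differentiable ℝ (fun x => a x k))
    (A : ℝ → Matrix (Fin n) (Fin n) ℂ)
    (hA : ∀ x, A x = ∑ k : Fin (n - 1), a x k •
      (S x ^ ((k : ℕ) + 1) -
        (Matrix.trace ((Matrix.diagonal (fun i => (lam i : ℂ))) ^ ((k : ℕ) + 1)) /
          (n : ℂ)) • (1 : Matrix (Fin n) (Fin n) ℂ)))
    (hperp : ∀ (x : ℝ) (Y : Matrix (Fin n) (Fin n) ℂ), S x * Y - Y * S x = 0 →
      (2 * (n : ℂ)) * Matrix.trace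
        ((Matrix.of fun i j : Fin n => Complex.I * deriv (fun y => A y i j) x) * Y)
        = 0) :
    ∀ (x : ℝ) (k : Fin (n - 1)), deriv (fun y => a y k) x = 0 := by
  intro x k
  obtain _ | N := n
  · exact k.elim0
  have htr : ∀ m y, trace (S y ^ m) = ∑ i, (lam i : ℂ) ^ m := fun m y => by
    rw [hS y, trace_conj_pow (hg y), diagonal_pow, trace_diagonal]; rfl
  have horth : ∀ m, trace ((of fun i j => deriv (fun y => A y i j) x) * S x ^ m) = 0 := by
    intro m
    have h := hperp x (S x ^ m) (sub_eq_zero.2 ((Commute.refl _).pow_right m).eq)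
    rw [show (of fun i j => Complex.I * deriv (fun y => A y i j) x) =
      Complex.I • of fun i j => deriv (fun y => A y i j) x from rfl, smul_mul, trace_smul,
      smul_eq_mul] at h
    simpa [Complex.I_ne_zero, Nat.cast_add_one_ne_zero] using h
  set c : Fin N → ℂ := fun k =>
    trace (diagonal (fun i => (lam i : ℂ)) ^ ((k : ℕ) + 1)) / ((N + 1 : ℕ) : ℂ)
  have hgram : ∀ m, ∑ k, deriv (fun y => a y k) x *
      trace ((S x ^ ((k : ℕ) + 1) - c k • 1) * S x ^ m) = 0 := fun m => by
    rw [← horth m, ← trace_deriv_sum_smul_mul_pow (fun i j => (hSdiff i j x).hasDerivAt) htr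
      (fun k => hadiff k x) (fun k => (k : ℕ) + 1) c]
    simp only [hA]
    rfl
  refine congrFun (eq_zero_of_forall_sum_mul_sum_pow_sub_eq_zero (f := fun i => (lam i : ℂ))
    (d := fun k => deriv (fun y => a y k) x) (c := c) (Complex.ofReal_injective.comp hinj)
    fun m => ?_) k
  rw [← hgram m]
  refine sum_congr rfl fun k _ => ?_
  rw [sub_mul, smul_mul, one_mul, trace_sub, trace_smul, ← pow_add, htr, htr, smul_eq_mul]

/-- Let S(x) be a smooth Hermitian curve in the adjoint orbit of a real
regular traceless diagonal J, S_k = S^k - (tr J^k/n) I, and a : ℝ → ℂ^{n-1} smooth with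
A = Σ a_k S_k. If i∂ₓA is pointwise Killing-orthogonal to ker(ad_{S(x)}), then all the
coefficients a_k are constant. -/
theorem stmt_18 (n : ℕ) (hn : 0 < n)
    (lam : Fin n → ℝ) (hinj : Function.Injective lam) (hsum : ∑ i, lam i = 0)
    (S : ℝ → Matrix (Fin n) (Fin n) ℂ)
    (g : ℝ → Matrix (Fin n) (Fin n) ℂ) (hg : ∀ x, IsUnit (g x))
    (hS : ∀ x, S x = g x * Matrix.diagonal (fun i => (lam i : ℂ)) * (g x)⁻¹)
    (hHerm : ∀ x, (S x)ᴴ = S x)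
    (hSdiff : ∀ i j : Fin n, Differentiable ℝ (fun x => S x i j))
    (a : ℝ → Fin (n - 1) → ℂ)
    (hadiff : ∀ k : Fin (n - 1), Differentiable ℝ (fun x => a x k))
    (A : ℝ → Matrix (Fin n) (Fin n) ℂ)
    (hA : ∀ x, A x = ∑ k : Fin (n - 1), a x k •
      (S x ^ ((k : ℕ) + 1) -
        (Matrix.trace ((Matrix.diagonal (fun i => (lam i : ℂ))) ^ ((k : ℕ) + 1)) /
          (n : ℂ)) • (1 : Matrix (Fin n) (Fin n) ℂ)))
    (hperp : ∀ (x : ℝ) (Y : Matrix (Fin n) (Fin n) ℂ), S x * Y - Y * S x = 0 →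
      (2 * (n : ℂ)) * Matrix.trace
        ((Matrix.of fun i j : Fin n => Complex.I * deriv (fun y => A y i j) x) * Y)
        = 0) :
    ∀ (x : ℝ) (k : Fin (n - 1)), deriv (fun y => a y k) x = 0 :=
  stmt_18_general n lam hinj S g hg hS hSdiff a hadiff A hA hperp
end
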